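/- Let f be a homogeneous non-mixed polynomial of total degree d ≥ 3 in the entries of a symmetric n×n matrix of variables Z, and assume that at least one off-diagonal monomial of f has a nonzero coefficient. Then f is not psd-stable. -/

import Mathlib

open MvPolynomial

/-- Variables of a symmetric `n×n` matrix of variables: pairs `(i,j)` with `i ≤ j`. -/
abbrev SymVar (n : ℕ) := {p : Fin n × Fin n // p.1 ≤ p.2}

/-- Evaluation of a polynomial in the entries of a symmetric matrix of variables
at a complex matrix `M` (the variable `z_ij` is sent to `M i j`). -/
noncomputable def evalMat {n : ℕ} (M : Matrix (Fin n) (Fin n) ℂ)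
    (f : MvPolynomial (SymVar n) ℂ) : ℂ :=
  eval (fun v : SymVar n => M v.1.1 v.1.2) f

/-- A polynomial in the entries of a symmetric `n×n` matrix of variables is
psd-stable if it does not vanish at any complex symmetric matrix whose
entrywise imaginary part is positive definite. -/
def PsdStable {n : ℕ} (f : MvPolynomial (SymVar n) ℂ) : Prop :=
  ∀ M : Matrix (Fin n) (Fin n) ℂ, M.IsSymm → (M.map Complex.im).PosDef →
    evalMat M f ≠ 0

/-- A diagonal monomial: all variables occurring in it are diagonal variables
(constants count as diagonal monomials). -/
def IsDiagMonomial {n : ℕ} (α : SymVar n →₀ ℕ) : Prop :=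
  ∀ v : SymVar n, α v ≠ 0 → v.1.1 = v.1.2

/-- An off-diagonal monomial: non-constant, and all variables occurring in it
are off-diagonal variables. -/
def IsOffMonomial {n : ℕ} (α : SymVar n →₀ ℕ) : Prop :=
  α ≠ 0 ∧ ∀ v : SymVar n, α v ≠ 0 → v.1.1 ≠ v.1.2

/-- A polynomial is non-mixed if every monomial appearing in it is either a
diagonal monomial or an off-diagonal monomial. -/
def NonMixed {n : ℕ} (f : MvPolynomial (SymVar n) ℂ) : Prop :=
  ∀ α ∈ f.support, IsDiagMonomial α ∨ IsOffMonomial α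

/-! Put `ζ` on the diagonal and real numbers `x` off the diagonal. Since `f` is homogeneous of
degree `d` and non-mixed, its value there is `ζ ^ d * f(1) + g(x)`, where `f(1)` is its value at
the identity matrix and `g` collects the off-diagonal monomials; the imaginary part of the matrix
is `(Im ζ) • 1`. If `f(1) = 0`, take `x = 0`. Otherwise `g ≠ 0` has a real point `x` with
`g(x) ≠ 0`, and since `d ≥ 3` the map `z ↦ z ^ d` sends the upper half-plane onto `ℂ \ {0}`, so
some `ζ` with `Im ζ > 0` solves `ζ ^ d = -g(x) / f(1)`. -/

lemma Complex.exists_im_pos_pow_eq {d : ℕ} (hd : 2 < d) {τ : ℂ} (hτ : τ ≠ 0) :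
    ∃ ζ : ℂ, 0 < ζ.im ∧ ζ ^ d = τ := by
  have hd' : (2 : ℝ) < d := by exact_mod_cast hd
  have hd0 : (d : ℂ) ≠ 0 := by exact_mod_cast (by omega : d ≠ 0)
  -- shift `arg τ` into `(0, 2π]`; then `ζ` below has argument in `(0, 2π / d] ⊆ (0, π)`
  obtain ⟨k, hk_pos, hk_le⟩ : ∃ k : ℕ, 0 < τ.arg + 2 * Real.pi * k ∧
      τ.arg + 2 * Real.pi * k ≤ 2 * Real.pi := by
    by_cases h : 0 < τ.arg
    · exact ⟨0, by simpa using h, by simpa using (τ.arg_le_pi).trans (by linarith [Real.pi_pos])⟩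
    · exact ⟨1, by simpa using (by linarith [τ.neg_pi_lt_arg] : 0 < τ.arg + 2 * Real.pi),
        by simpa using (not_lt.mp h)⟩
  refine ⟨Complex.exp ((Complex.log τ + k * (2 * Real.pi * Complex.I)) / d), ?_, ?_⟩
  · have him : ((Complex.log τ + k * (2 * Real.pi * Complex.I)) / d).im
        = (τ.arg + 2 * Real.pi * k) / d := by
      simp only [div_natCast_im, add_im, log_im, mul_im, natCast_re, mul_re, re_ofNat, ofReal_re,
        im_ofNat, ofReal_im, mul_zero, sub_zero, I_im, mul_one, zero_mul, add_zero, I_re,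
        natCast_im, sub_self]
      ring
    rw [Complex.exp_im, him]
    refine mul_pos (Real.exp_pos _) (Real.sin_pos_of_pos_of_lt_pi (by positivity) ?_)
    rw [div_lt_iff₀ (by linarith)]
    nlinarith [Real.pi_pos]
  · rw [← Complex.exp_nat_mul, mul_div_cancel₀ _ hd0, Complex.exp_add, Complex.exp_log hτ,
      Complex.exp_nat_mul_two_pi_mul_I, mul_one]

lemma MvPolynomial.exists_real_eval_ne_zero {σ : Type*} {g : MvPolynomial σ ℂ} (hg : g ≠ 0) :
    ∃ x : σ → ℝ, eval (fun v => (x v : ℂ)) g ≠ 0 := by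
  by_contra! h
  refine hg (funext_set (fun _ => Set.range ((↑) : ℝ → ℂ))
    (fun _ => Set.infinite_range_of_injective Complex.ofReal_injective) fun z hz => ?_)
  choose x hx using fun v => hz v (Set.mem_univ v)
  rw [map_zero, ← h x]
  simp only [hx]

namespace SymVar

variable {n : ℕ}

def ofPair (i j : Fin n) : SymVar n :=
  if h : i ≤ j then ⟨(i, j), h⟩ else ⟨(j, i), le_of_not_ge h⟩

lemma ofPair_comm (i j : Fin n) : ofPair i j = ofPair j i := by
  rcases lt_trichotomy i j with h | rfl | h
  · simp [ofPair, h.le, not_le.mpr h]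
  · rfl
  · simp [ofPair, h.le, not_le.mpr h]

lemma ofPair_val (v : SymVar n) : ofPair v.1.1 v.1.2 = v := by
  simp [ofPair, v.2]

lemma ofPair_fst_eq_snd_iff (i j : Fin n) : (ofPair i j).1.1 = (ofPair i j).1.2 ↔ i = j := by
  unfold ofPair; split_ifs <;> simp [eq_comm]

end SymVar

def symMatrix {R : Type*} {n : ℕ} (e : SymVar n → R) : Matrix (Fin n) (Fin n) R :=
  fun i j => e (SymVar.ofPair i j)

lemma symMatrix_isSymm {R : Type*} {n : ℕ} (e : SymVar n → R) : (symMatrix e).IsSymm :=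
  Matrix.IsSymm.ext fun i j => by simp only [symMatrix, SymVar.ofPair_comm i j]

lemma evalMat_symMatrix {n : ℕ} (e : SymVar n → ℂ) (f : MvPolynomial (SymVar n) ℂ) :
    evalMat (symMatrix e) f = eval e f := by
  simp only [evalMat, symMatrix, SymVar.ofPair_val]

def diagOffPoint {n : ℕ} (ζ : ℂ) (x : SymVar n → ℝ) (v : SymVar n) : ℂ :=
  if v.1.1 = v.1.2 then ζ else x v

lemma map_im_symMatrix_diagOffPoint {n : ℕ} (ζ : ℂ) (x : SymVar n → ℝ) :
    (symMatrix (diagOffPoint ζ x)).map Complex.im = Matrix.diagonal fun _ => ζ.im := by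
  ext i j
  by_cases h : i = j <;>
    simp [symMatrix, diagOffPoint, SymVar.ofPair_fst_eq_snd_iff, h]

lemma not_psdStable_of_eval_diagOffPoint_eq_zero {n : ℕ} {f : MvPolynomial (SymVar n) ℂ}
    {ζ : ℂ} (hζ : 0 < ζ.im) {x : SymVar n → ℝ} (hf : eval (diagOffPoint ζ x) f = 0) :
    ¬ PsdStable f := fun hstable =>
  hstable _ (symMatrix_isSymm _)
    (by rw [map_im_symMatrix_diagOffPoint, Matrix.posDef_diagonal_iff]; exact fun _ => hζ)
    (by rw [evalMat_symMatrix, hf])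

section NonDiagPart

variable {n : ℕ}

open Classical in
noncomputable def nonDiagPart (f : MvPolynomial (SymVar n) ℂ) : MvPolynomial (SymVar n) ℂ :=
  ∑ α ∈ f.support with ¬ IsDiagMonomial α, monomial α (coeff α f)

open Classical in
lemma coeff_nonDiagPart (f : MvPolynomial (SymVar n) ℂ) (α : SymVar n →₀ ℕ) :
    coeff α (nonDiagPart f) = if IsDiagMonomial α then 0 else coeff α f := by
  rw [nonDiagPart, coeff_sum]
  simp only [coeff_monomial]
  rw [Finset.sum_ite_eq']
  simp only [Finset.mem_filter, mem_support_iff]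
  split_ifs <;> tauto

lemma eval_zero_nonDiagPart (f : MvPolynomial (SymVar n) ℂ) : eval 0 (nonDiagPart f) = 0 := by
  have hdiag : IsDiagMonomial (0 : SymVar n →₀ ℕ) := fun _ h => absurd rfl h
  rw [eval_zero, constantCoeff_eq, coeff_nonDiagPart, if_pos hdiag]

lemma IsOffMonomial.not_isDiagMonomial {α : SymVar n →₀ ℕ} (hα : IsOffMonomial α) :
    ¬ IsDiagMonomial α := by
  obtain ⟨v, hv⟩ := Finsupp.ne_iff.mp hα.1
  exact fun hdiag => hα.2 v hv (hdiag v hv)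

lemma prod_diagOffPoint_of_isDiagMonomial {ζ : ℂ} {x : SymVar n → ℝ} {α : SymVar n →₀ ℕ}
    (hα : IsDiagMonomial α) :
    α.prod (fun v k => diagOffPoint ζ x v ^ k) = ζ ^ ∑ v ∈ α.support, α v := by
  rw [← Finset.prod_pow_eq_pow_sum]
  exact Finset.prod_congr rfl fun v hv => by
    simp only [diagOffPoint, if_pos (hα v (Finsupp.mem_support_iff.mp hv))]

lemma prod_diagOffPoint_of_isOffMonomial {ζ : ℂ} {x : SymVar n → ℝ} {α : SymVar n →₀ ℕ}
    (hα : IsOffMonomial α) :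
    α.prod (fun v k => diagOffPoint ζ x v ^ k) = α.prod (fun v k => (x v : ℂ) ^ k) :=
  Finsupp.prod_congr fun v hv => by
    simp only [diagOffPoint, if_neg (hα.2 v (Finsupp.mem_support_iff.mp hv))]

open Classical in
lemma eval_diagOffPoint_eq_sum {d : ℕ} {f : MvPolynomial (SymVar n) ℂ} (hhom : f.IsHomogeneous d)
    (hnm : NonMixed f) (ζ : ℂ) (x : SymVar n → ℝ) :
    eval (diagOffPoint ζ x) f =
      ζ ^ d * ∑ α ∈ f.support with IsDiagMonomial α, coeff α f
        + eval (fun v => (x v : ℂ)) (nonDiagPart f) := by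
  conv_lhs => rw [f.as_sum]
  simp only [nonDiagPart, map_sum, eval_monomial]
  rw [← Finset.sum_filter_add_sum_filter_not f.support (IsDiagMonomial ·), Finset.mul_sum]
  congr 1 <;> refine Finset.sum_congr rfl fun α hα => ?_ <;> rw [Finset.mem_filter] at hα
  · rw [prod_diagOffPoint_of_isDiagMonomial hα.2, ← hhom.degree_eq_sum_deg_support hα.1,
      mul_comm]
  · rw [prod_diagOffPoint_of_isOffMonomial ((hnm α hα.1).resolve_left hα.2)]

lemma eval_diagOffPoint {d : ℕ} {f : MvPolynomial (SymVar n) ℂ} (hhom : f.IsHomogeneous d)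
    (hnm : NonMixed f) (ζ : ℂ) (x : SymVar n → ℝ) :
    eval (diagOffPoint ζ x) f =
      ζ ^ d * eval (diagOffPoint 1 0) f + eval (fun v => (x v : ℂ)) (nonDiagPart f) := by
  have h0 : eval (fun v => ((0 : SymVar n → ℝ) v : ℂ)) (nonDiagPart f) = 0 := by
    simpa using eval_zero_nonDiagPart f
  rw [eval_diagOffPoint_eq_sum hhom hnm ζ x, eval_diagOffPoint_eq_sum hhom hnm 1 0, h0,
    one_pow, one_mul, add_zero]

end NonDiagPart

/-- A homogeneous non-mixed polynomial of degree `d ≥ 3` with at least one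
off-diagonal monomial is not psd-stable. -/
theorem homogeneous_nonMixed_not_psdStable {n d : ℕ}
    (f : MvPolynomial (SymVar n) ℂ) (hd : 3 ≤ d)
    (hhom : f.IsHomogeneous d) (hnm : NonMixed f)
    (hoff : ∃ α ∈ f.support, IsOffMonomial α) :
    ¬ PsdStable f := by
  by_cases hA : eval (diagOffPoint 1 0) f = 0
  · refine not_psdStable_of_eval_diagOffPoint_eq_zero (ζ := Complex.I) (x := 0) (by simp) ?_
    rw [eval_diagOffPoint hhom hnm, hA, mul_zero, zero_add]
    simpa using eval_zero_nonDiagPart f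
  · obtain ⟨α₀, hα₀f, hα₀off⟩ := hoff
    have hg : nonDiagPart f ≠ 0 := fun h => mem_support_iff.mp hα₀f <| by
      simpa [h, hα₀off.not_isDiagMonomial] using (coeff_nonDiagPart f α₀).symm
    obtain ⟨x, hx⟩ := exists_real_eval_ne_zero hg
    obtain ⟨ζ, hζ, hζd⟩ := Complex.exists_im_pos_pow_eq hd (div_ne_zero (neg_ne_zero.mpr hx) hA)
    refine not_psdStable_of_eval_diagOffPoint_eq_zero hζ (x := x) ?_
    rw [eval_diagOffPoint hhom hnm, hζd, div_mul_cancel₀ _ hA, neg_add_cancel]
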